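/- (Theorem 5.1, Case 2: reverse KL increases probability mass preferentially on the more likely category.) In the setting of one gradient step on the logits of a softmax distribution, there exists a constant c₀ > 1 (in fact c₀ = e suffices) such that: if x1, x2 ∈ Y satisfy p(x2) < p(x1) and q(x1) = q(x2) ≥ c₀·p(x1), then Δ^r(x1, x2) ≥ 0 > Δ^f(x1, x2); in particular Δ^r(x1, x2) > Δ^f(x1, x2). -/
import Mathlib


open scoped BigOperators

/-- Softmax distribution attached to a vector of logits on a finite type. -/
noncomputable def softmax {Y : Type*} [Fintype Y] (f : Y → ℝ) (y : Y) : ℝ :=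
  Real.exp (f y) / ∑ k, Real.exp (f k)

/-- KL divergence between two distributions on a finite type,
with the convention `0 * log 0 = 0` (automatic since `0 * x = 0`). -/
noncomputable def KL {Y : Type*} [Fintype Y] (p q : Y → ℝ) : ℝ :=
  ∑ y, p y * Real.log (p y / q y)

lemma sum_exp_pos {Y : Type*} [Fintype Y] [Nonempty Y] (f : Y → ℝ) :
    0 < ∑ k, Real.exp (f k) :=
  Finset.sum_pos (fun _ _ => Real.exp_pos _) Finset.univ_nonempty

lemma softmax_pos {Y : Type*} [Fintype Y] [Nonempty Y] (f : Y → ℝ) (y : Y) :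
    0 < softmax f y :=
  div_pos (Real.exp_pos _) (sum_exp_pos f)

lemma softmax_sum {Y : Type*} [Fintype Y] [Nonempty Y] (f : Y → ℝ) :
    ∑ y, softmax f y = 1 := by
  unfold softmax
  rw [← Finset.sum_div, div_self (ne_of_gt (sum_exp_pos f))]

lemma log_softmax_ratio {Y : Type*} [Fintype Y] [Nonempty Y] (f g : Y → ℝ) (x : Y) :
    Real.log (softmax g x / softmax f x)
      = g x - f x + (Real.log (∑ k, Real.exp (f k)) - Real.log (∑ k, Real.exp (g k))) := by
  rw [Real.log_div (ne_of_gt (softmax_pos g x)) (ne_of_gt (softmax_pos f x))]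
  unfold softmax
  rw [Real.log_div (ne_of_gt (Real.exp_pos _)) (ne_of_gt (sum_exp_pos g)),
    Real.log_div (ne_of_gt (Real.exp_pos _)) (ne_of_gt (sum_exp_pos f)),
    Real.log_exp, Real.log_exp]
  ring

lemma KL_nonneg' {Y : Type*} [Fintype Y] (p q : Y → ℝ)
    (hp : ∀ y, 0 < p y) (hq : ∀ y, 0 < q y)
    (hps : ∑ y, p y = 1) (hqs : ∑ y, q y = 1) : 0 ≤ KL p q := by
  have key : ∀ y : Y, p y - q y ≤ p y * Real.log (p y / q y) := by
    intro y
    have h1 : Real.log (q y / p y) ≤ q y / p y - 1 :=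
      Real.log_le_sub_one_of_pos (div_pos (hq y) (hp y))
    have h2 : Real.log (q y / p y) = -(Real.log (p y / q y)) := by
      rw [← Real.log_inv, inv_div]
    have h3 : p y * Real.log (q y / p y) ≤ p y * (q y / p y - 1) :=
      mul_le_mul_of_nonneg_left h1 (le_of_lt (hp y))
    have h4 : p y * (q y / p y - 1) = q y - p y := by
      rw [mul_sub, mul_one, mul_comm (p y), div_mul_cancel₀ _ (ne_of_gt (hp y))]
    nlinarith [hp y]
  have hle : ∑ y, (p y - q y) ≤ ∑ y, p y * Real.log (p y / q y) :=
    Finset.sum_le_sum (fun y _ => key y)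
  have hsum : ∑ y, (p y - q y) = 0 := by
    rw [Finset.sum_sub_distrib, hps, hqs]; ring
  unfold KL
  linarith

lemma tlogt_anti (a b Q : ℝ) (ha : 0 < a) (hab : a ≤ b) (hbq : Real.exp 1 * b ≤ Q) :
    b * Real.log (b / Q) ≤ a * Real.log (a / Q) := by
  have hb : 0 < b := lt_of_lt_of_le ha hab
  have hQ : 0 < Q := lt_of_lt_of_le (by positivity) hbq
  have he : (0:ℝ) < Real.exp 1 := Real.exp_pos 1
  have hL : a * (Real.log b - Real.log a) ≤ b - a := by
    have h1 : Real.log (b / a) ≤ b / a - 1 :=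
      Real.log_le_sub_one_of_pos (div_pos hb ha)
    have h2 : a * Real.log (b / a) ≤ a * (b / a - 1) :=
      mul_le_mul_of_nonneg_left h1 (le_of_lt ha)
    have h3 : a * (b / a - 1) = b - a := by
      rw [mul_sub, mul_one, mul_comm a, div_mul_cancel₀ _ (ne_of_gt ha)]
    rw [Real.log_div (ne_of_gt hb) (ne_of_gt ha)] at h2
    linarith
  have hM : Real.log b - Real.log Q ≤ -1 := by
    have h1 : b / Q ≤ Real.exp (-1) := by
      rw [Real.exp_neg, div_le_iff₀ hQ]
      have hinv : (Real.exp 1)⁻¹ * Real.exp 1 = 1 := inv_mul_cancel₀ (ne_of_gt he)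
      nlinarith [mul_le_mul_of_nonneg_left hbq (le_of_lt (inv_pos.mpr he))]
    have h2 : Real.log (b / Q) ≤ -1 := by
      calc Real.log (b / Q) ≤ Real.log (Real.exp (-1)) :=
            Real.log_le_log (div_pos hb hQ) h1
        _ = -1 := Real.log_exp _
    rw [Real.log_div (ne_of_gt hb) (ne_of_gt hQ)] at h2
    exact h2
  rw [Real.log_div (ne_of_gt hb) (ne_of_gt hQ), Real.log_div (ne_of_gt ha) (ne_of_gt hQ)]
  nlinarith [mul_le_mul_of_nonneg_left hM (sub_nonneg.mpr hab)]

/-- Theorem 5.1, Case 2: there exists a constant `c₀ > 1`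
(in fact `c₀ = e` suffices) such that whenever `p(x2) < p(x1)` and
`q(x1) = q(x2) ≥ c₀·p(x1)`, the reverse-KL step satisfies
`Δ^r(x1,x2) ≥ 0 > Δ^f(x1,x2)`; in particular `Δ^r(x1,x2) > Δ^f(x1,x2)`. -/
theorem reverse_KL_prefers_likelier_category_case2
    {Y : Type*} [Fintype Y] (hcard : 2 ≤ Fintype.card Y)
    (q : Y → ℝ) (hq_pos : ∀ y, 0 < q y) (hq_sum : ∑ y, q y = 1)
    (f : Y → ℝ) (η : ℝ) (hη : 0 < η)
    (p pf pr : Y → ℝ)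
    (hp : p = softmax f)
    (hpf : pf = softmax (f - η • fun y => p y - q y))
    (hpr : pr = softmax (f - η • fun y => p y * (Real.log (p y / q y) - KL p q))) :
    ∃ c₀ : ℝ, 1 < c₀ ∧
      ∀ x1 x2 : Y, p x2 < p x1 → q x1 = q x2 → c₀ * p x1 ≤ q x1 →
        (0 ≤ Real.log (pr x1 / p x1) - Real.log (pr x2 / p x2)) ∧
        (Real.log (pf x1 / p x1) - Real.log (pf x2 / p x2) < 0) ∧
        (Real.log (pf x1 / p x1) - Real.log (pf x2 / p x2) <
          Real.log (pr x1 / p x1) - Real.log (pr x2 / p x2)) := by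
  have hne : Nonempty Y := Fintype.card_pos_iff.mp (by omega)
  subst hp hpf hpr
  set p : Y → ℝ := softmax f with hp
  refine ⟨Real.exp 1, by nlinarith [Real.exp_one_gt_d9], ?_⟩
  intro x1 x2 h12 hqeq hc
  have hppos : ∀ y, 0 < p y := fun y => softmax_pos f y
  have hK : 0 ≤ KL p q := KL_nonneg' p q hppos hq_pos (softmax_sum f) hq_sum
  set gF : Y → ℝ := f - η • fun y => p y - q y with hgF
  set gR : Y → ℝ := f - η • fun y => p y * (Real.log (p y / q y) - KL p q) with hgR
  have hΔf : Real.log (softmax gF x1 / p x1) - Real.log (softmax gF x2 / p x2)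
      = -η * (p x1 - p x2) := by
    rw [hp, log_softmax_ratio f gF x1, log_softmax_ratio f gF x2]
    simp only [hgF, Pi.sub_apply, Pi.smul_apply, smul_eq_mul]
    rw [hqeq]; ring
  have hΔr : Real.log (softmax gR x1 / p x1) - Real.log (softmax gR x2 / p x2)
      = -η * (p x1 * (Real.log (p x1 / q x1) - KL p q)
            - p x2 * (Real.log (p x2 / q x2) - KL p q)) := by
    rw [hp, log_softmax_ratio f gR x1, log_softmax_ratio f gR x2]
    simp only [hgR, Pi.sub_apply, Pi.smul_apply, smul_eq_mul]
    ring
  have hmono : p x1 * Real.log (p x1 / q x1) ≤ p x2 * Real.log (p x2 / q x2) := by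
    rw [hqeq]
    exact tlogt_anti (p x2) (p x1) (q x2) (hppos x2) (le_of_lt h12) (hqeq ▸ hc)
  have hr : 0 ≤ Real.log (softmax gR x1 / p x1) - Real.log (softmax gR x2 / p x2) := by
    rw [hΔr]
    have h2 : p x2 * KL p q ≤ p x1 * KL p q :=
      mul_le_mul_of_nonneg_right (le_of_lt h12) hK
    nlinarith
  have hf : Real.log (softmax gF x1 / p x1) - Real.log (softmax gF x2 / p x2) < 0 := by
    rw [hΔf]; nlinarith
  exact ⟨hr, hf, by linarith⟩
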